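/- Let Λ ⊂ {1,…,N} and suppose x̃ ∈ ℝ^N with supp(x̃) ∩ Λ = ∅. Define h = A_Λᵀ A_Λ x̃. If the M×N real matrix Φ satisfies the RIP of order ‖x̃‖₀ + |Λ| + 1 with isometry constant δ, then |h(j) − x̃(j)| ≤ (δ/(1−δ))‖x̃‖₂ for all j ∉ Λ. -/

import Mathlib

noncomputable section

namespace OMP

open Matrix Finset

/-- The support of a vector, as a `Finset`. -/
def supp {n : ℕ} (x : Fin n → ℝ) : Finset (Fin n) :=
  Finset.univ.filter fun j => x j ≠ 0

/-- The Euclidean (ℓ²) norm of a vector. -/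
def l2 {n : ℕ} (x : Fin n → ℝ) : ℝ := Real.sqrt (∑ j, x j ^ 2)

/-- The ℓ^∞ norm of a vector. -/
def linf {n : ℕ} (x : Fin n → ℝ) : ℝ := ⨆ j, |x j|

/-- The standard inner product of two vectors. -/
def dotp {n : ℕ} (x y : Fin n → ℝ) : ℝ := ∑ j, x j * y j

/-- The restriction of a vector to a set of indices (zero elsewhere). -/
def restr {n : ℕ} (Γ : Finset (Fin n)) (x : Fin n → ℝ) : Fin n → ℝ :=
  fun j => if j ∈ Γ then x j else 0

/-- The restricted isometry property of order `K` with isometry constant `δ`. -/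
def RIP {M N : ℕ} (K : ℕ) (Φ : Matrix (Fin M) (Fin N) ℝ) (δ : ℝ) : Prop :=
  0 < δ ∧ δ < 1 ∧ ∀ x : Fin N → ℝ, (supp x).card ≤ K →
    (1 - δ) * l2 x ^ 2 ≤ l2 (Φ.mulVec x) ^ 2 ∧
      l2 (Φ.mulVec x) ^ 2 ≤ (1 + δ) * l2 x ^ 2

/-- The span of the columns of `Φ` indexed by `Λ`, as a submodule of Euclidean space. -/
def colSpan {M N : ℕ} (Φ : Matrix (Fin M) (Fin N) ℝ) (Λ : Finset (Fin N)) :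
    Submodule ℝ (EuclideanSpace ℝ (Fin M)) :=
  Submodule.span ℝ ((fun j => (WithLp.equiv 2 (Fin M → ℝ)).symm fun i => Φ i j) '' (Λ : Set (Fin N)))

/-- Orthogonal projection `P_Λ` onto the span of the columns of `Φ` indexed by `Λ`. -/
def projCol {M N : ℕ} (Φ : Matrix (Fin M) (Fin N) ℝ) (Λ : Finset (Fin N))
    (v : Fin M → ℝ) : Fin M → ℝ :=
  WithLp.equiv 2 (Fin M → ℝ)
    ((colSpan Φ Λ).orthogonalProjection ((WithLp.equiv 2 (Fin M → ℝ)).symm v) : EuclideanSpace ℝ (Fin M))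

/-- The matrix `A_Λ = (I - P_Λ) Φ`: the columns of `Φ` orthogonalized against `colSpan Φ Λ`. -/
def Amat {M N : ℕ} (Φ : Matrix (Fin M) (Fin N) ℝ) (Λ : Finset (Fin N)) :
    Matrix (Fin M) (Fin N) ℝ :=
  Matrix.of fun i j => Φ i j - projCol Φ Λ (fun i' => Φ i' j) i

/-!
For `x` supported off `Λ`, the projection `P_Λ Φ x` is `Φ w` for some `w` supported on `Λ`.
Since `x ⊥ w`, the polarized RIP gives `‖Φ w‖² = ⟪Φ x, Φ w⟫ ≤ δ ‖x‖ ‖w‖`, while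
`(1 - δ) ‖w‖² ≤ ‖Φ w‖²`; hence `‖P_Λ Φ x‖² ≤ δ² ‖x‖² / (1 - δ)`, so `A_Λ = (I - P_Λ) Φ` is a
restricted isometry with constant `δ / (1 - δ)` on vectors supported off `Λ`. Polarizing once
more, `|⟪A_Λ u, A_Λ v⟫ - ⟪u, v⟫| ≤ δ / (1 - δ) ‖u‖ ‖v‖` for such `u, v`, and `h j - x̃ j` is this
quantity for `u = e_j`, `v = x̃`.
-/

open scoped RealInnerProductSpace

section RestrictedIsometry

variable {V W : Type*} [NormedAddCommGroup V] [InnerProductSpace ℝ V]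
  [NormedAddCommGroup W] [InnerProductSpace ℝ W]

theorem abs_inner_map_sub_inner_le_sq_add_sq (T : V →ₗ[ℝ] W) {S : Submodule ℝ V} {c : ℝ}
    (hT : ∀ y ∈ S, |‖T y‖ ^ 2 - ‖y‖ ^ 2| ≤ c * ‖y‖ ^ 2) {u v : V} (hu : u ∈ S) (hv : v ∈ S) :
    |⟪T u, T v⟫ - ⟪u, v⟫| ≤ c * (‖u‖ ^ 2 + ‖v‖ ^ 2) / 2 := by
  have hadd := hT (u + v) (S.add_mem hu hv)
  have hsub := hT (u - v) (S.sub_mem hu hv)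
  rw [map_add, norm_add_sq_real, norm_add_sq_real] at hadd
  rw [map_sub, norm_sub_sq_real, norm_sub_sq_real] at hsub
  rw [abs_le] at hadd hsub ⊢
  constructor <;> linarith [hadd.1, hadd.2, hsub.1, hsub.2]

theorem abs_inner_map_sub_inner_le (T : V →ₗ[ℝ] W) {S : Submodule ℝ V} {c : ℝ}
    (hT : ∀ y ∈ S, |‖T y‖ ^ 2 - ‖y‖ ^ 2| ≤ c * ‖y‖ ^ 2) {u v : V} (hu : u ∈ S) (hv : v ∈ S) :
    |⟪T u, T v⟫ - ⟪u, v⟫| ≤ c * ‖u‖ * ‖v‖ := by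
  rcases eq_or_ne u 0 with rfl | hu0
  · simp
  rcases eq_or_ne v 0 with rfl | hv0
  · simp
  have hu' : 0 < ‖u‖ := norm_pos_iff.2 hu0
  have hv' : 0 < ‖v‖ := norm_pos_iff.2 hv0
  have key := abs_inner_map_sub_inner_le_sq_add_sq T hT (S.smul_mem ‖u‖⁻¹ hu) (S.smul_mem ‖v‖⁻¹ hv)
  rw [map_smul, map_smul, real_inner_smul_left, real_inner_smul_right, real_inner_smul_left,
    real_inner_smul_right, ← mul_sub, ← mul_sub, norm_smul, norm_smul, norm_inv, norm_inv,
    norm_norm, norm_norm, inv_mul_cancel₀ hu'.ne', inv_mul_cancel₀ hv'.ne', abs_mul, abs_mul,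
    abs_inv, abs_inv, abs_norm, abs_norm, ← mul_assoc, ← mul_inv,
    inv_mul_le_iff₀ (by positivity)] at key
  linarith

theorem abs_norm_sq_starProjection_orthogonal_sub_le (T : V →ₗ[ℝ] W) {S L : Submodule ℝ V}
    (hSL : S ⟂ L) {K : Submodule ℝ W} [K.HasOrthogonalProjection] (hK : K ≤ L.map T)
    {δ : ℝ} (hδ : δ < 1) (hT : ∀ y ∈ S ⊔ L, |‖T y‖ ^ 2 - ‖y‖ ^ 2| ≤ δ * ‖y‖ ^ 2)
    {x : V} (hx : x ∈ S) :
    |‖Kᗮ.starProjection (T x)‖ ^ 2 - ‖x‖ ^ 2| ≤ δ / (1 - δ) * ‖x‖ ^ 2 := by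
  obtain ⟨w, hwL, hw⟩ := hK (K.starProjection_apply_mem (T x))
  have hpyth := K.norm_sq_eq_add_norm_sq_starProjection (T x)
  have hinner : ⟪T x, K.starProjection (T x)⟫ = ‖K.starProjection (T x)‖ ^ 2 := by
    have := K.starProjection_inner_eq_zero (T x) _ (K.starProjection_apply_mem (T x))
    rw [inner_sub_left, sub_eq_zero] at this
    rw [this, real_inner_self_eq_norm_sq]
  have hcross := abs_inner_map_sub_inner_le T hT (Submodule.mem_sup_left hx)
    (Submodule.mem_sup_right hwL)
  rw [hSL.inner_eq hx hwL, sub_zero, hw, hinner, abs_le] at hcross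
  have hw_iso := abs_le.1 (hT w (Submodule.mem_sup_right hwL))
  rw [hw] at hw_iso
  have hx_iso := abs_le.1 (hT x (Submodule.mem_sup_left hx))
  have h1δ : 0 < 1 - δ := by linarith
  -- combine `‖P (T x)‖² ≤ δ ‖x‖ ‖w‖` and `(1 - δ) ‖w‖² ≤ ‖P (T x)‖²` to eliminate `‖w‖`
  have hproj_mul : (1 - δ) * ‖K.starProjection (T x)‖ ^ 2 ≤ δ ^ 2 * ‖x‖ ^ 2 := by
    nlinarith [sq_nonneg (δ * ‖x‖ - (1 - δ) * ‖w‖), mul_le_mul_of_nonneg_left hcross.2 h1δ.le,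
      mul_le_mul_of_nonneg_left hw_iso.1 h1δ.le]
  have hproj : ‖K.starProjection (T x)‖ ^ 2 ≤ δ ^ 2 / (1 - δ) * ‖x‖ ^ 2 := by
    rwa [div_mul_eq_mul_div, le_div_iff₀' h1δ]
  have hδ' : δ / (1 - δ) = δ + δ ^ 2 / (1 - δ) := by
    field_simp
    ring
  have hnonneg : 0 ≤ δ ^ 2 / (1 - δ) * ‖x‖ ^ 2 := by positivity
  rw [hδ', add_mul, abs_le]
  constructor <;> linarith [hx_iso.1, hx_iso.2, sq_nonneg ‖K.starProjection (T x)‖]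

end RestrictedIsometry

section Supported

variable {n : ℕ}

def supportedOn (Γ : Finset (Fin n)) : Submodule ℝ (EuclideanSpace ℝ (Fin n)) :=
  Submodule.span ℝ ((fun j => EuclideanSpace.single j 1) '' Γ)

theorem mem_supportedOn {Γ : Finset (Fin n)} {x : EuclideanSpace ℝ (Fin n)} :
    x ∈ supportedOn Γ ↔ supp (WithLp.ofLp x) ⊆ Γ := by
  have := (EuclideanSpace.basisFun (Fin n) ℝ).toBasis.mem_span_image (m := x) (s := Γ)
  simp only [OrthonormalBasis.coe_toBasis, EuclideanSpace.basisFun_apply] at this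
  rw [supportedOn, this, Finset.coe_subset]
  suffices ((EuclideanSpace.basisFun (Fin n) ℝ).toBasis.repr x).support = supp (WithLp.ofLp x) by
    rw [this]
  ext j
  simp [supp]

theorem single_mem_supportedOn {Γ : Finset (Fin n)} {j : Fin n} (hj : j ∈ Γ) :
    EuclideanSpace.single j 1 ∈ supportedOn Γ :=
  Submodule.subset_span ⟨j, hj, rfl⟩

theorem supportedOn_sup (Γ Λ : Finset (Fin n)) :
    supportedOn Γ ⊔ supportedOn Λ = supportedOn (Γ ∪ Λ) := by
  rw [supportedOn, supportedOn, supportedOn, Finset.coe_union, Set.image_union,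
    Submodule.span_union]

theorem supportedOn_isOrtho {Γ Λ : Finset (Fin n)} (h : Disjoint Γ Λ) :
    supportedOn Γ ⟂ supportedOn Λ := by
  rw [supportedOn, supportedOn, Submodule.isOrtho_span]
  rintro _ ⟨i, hi, rfl⟩ _ ⟨j, hj, rfl⟩
  have hij : i ≠ j := fun hij => Finset.disjoint_left.1 h hi (hij ▸ hj)
  simp [EuclideanSpace.inner_single_left, hij]

theorem l2_eq_norm (x : Fin n → ℝ) : l2 x = ‖WithLp.toLp 2 x‖ := by
  rw [l2, EuclideanSpace.norm_eq]
  simp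

end Supported

section MatrixOperators

variable {M N : ℕ}

theorem toLpLin_apply_single {m n : Type*} [Fintype n] [DecidableEq n] (A : Matrix m n ℝ)
    (j : n) : toLpLin 2 2 A (EuclideanSpace.single j 1) = WithLp.toLp 2 fun i => A i j := by
  ext i
  simp

theorem colSpan_eq_map (Φ : Matrix (Fin M) (Fin N) ℝ) (Λ : Finset (Fin N)) :
    colSpan Φ Λ = (supportedOn Λ).map (toLpLin 2 2 Φ) := by
  rw [supportedOn, Submodule.map_span, ← Set.image_comp]
  congr 2
  funext j
  simp

theorem toLpLin_Amat (Φ : Matrix (Fin M) (Fin N) ℝ) (Λ : Finset (Fin N)) :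
    toLpLin 2 2 (Amat Φ Λ) =
      (colSpan Φ Λ)ᗮ.starProjection.toLinearMap ∘ₗ toLpLin 2 2 Φ := by
  refine (EuclideanSpace.basisFun (Fin N) ℝ).toBasis.ext fun j => ?_
  ext i
  simp [Amat, projCol, toLpLin_apply_single]

theorem transpose_mulVec_mulVec_apply {m n : Type*} [Fintype m] [Fintype n] [DecidableEq n]
    (A : Matrix m n ℝ) (x : n → ℝ) (j : n) :
    (Aᵀ *ᵥ (A *ᵥ x)) j =
      ⟪toLpLin 2 2 A (EuclideanSpace.single j 1), toLpLin 2 2 A (WithLp.toLp 2 x)⟫ := by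
  simp [toLpLin_apply_single, PiLp.inner_apply, Matrix.mulVec, dotProduct, mul_comm]

theorem RIP.abs_norm_sq_sub_le {K : ℕ} {Φ : Matrix (Fin M) (Fin N) ℝ} {δ : ℝ} (hΦ : RIP K Φ δ)
    {Γ : Finset (Fin N)} (hΓ : Γ.card ≤ K) :
    ∀ y ∈ supportedOn Γ, |‖toLpLin 2 2 Φ y‖ ^ 2 - ‖y‖ ^ 2| ≤ δ * ‖y‖ ^ 2 := by
  intro y hy
  obtain ⟨-, -, hiso⟩ := hΦ
  have := hiso (WithLp.ofLp y) ((Finset.card_le_card (mem_supportedOn.1 hy)).trans hΓ)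
  have hΦy : WithLp.toLp 2 (Φ *ᵥ WithLp.ofLp y) = toLpLin 2 2 Φ y := rfl
  rw [l2_eq_norm, l2_eq_norm, WithLp.toLp_ofLp, hΦy] at this
  rw [abs_le]
  constructor <;> linarith [this.1, this.2]

end MatrixOperators

theorem RIP.abs_inner_Amat_sub_inner_le {M N K : ℕ} {Φ : Matrix (Fin M) (Fin N) ℝ} {δ : ℝ}
    (hΦ : RIP K Φ δ) {Γ Λ : Finset (Fin N)} (hΓΛ : Disjoint Γ Λ) (hK : (Γ ∪ Λ).card ≤ K)
    {u v : EuclideanSpace ℝ (Fin N)} (hu : u ∈ supportedOn Γ) (hv : v ∈ supportedOn Γ) :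
    |⟪toLpLin 2 2 (Amat Φ Λ) u, toLpLin 2 2 (Amat Φ Λ) v⟫ - ⟪u, v⟫| ≤
      δ / (1 - δ) * ‖u‖ * ‖v‖ := by
  refine abs_inner_map_sub_inner_le _ (fun x hx => ?_) hu hv
  rw [toLpLin_Amat, LinearMap.comp_apply, ContinuousLinearMap.coe_coe]
  exact abs_norm_sq_starProjection_orthogonal_sub_le _ (supportedOn_isOrtho hΓΛ)
    (colSpan_eq_map Φ Λ).le hΦ.2.1
    (fun y hy => hΦ.abs_norm_sq_sub_le hK y (supportedOn_sup Γ Λ ▸ hy)) hx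

/-- bound on the entries of `h = A_Λᵀ A_Λ x̃`. -/
theorem stmt3 {M N : ℕ} (Φ : Matrix (Fin M) (Fin N) ℝ) (δ : ℝ) (Λ : Finset (Fin N))
    (xt : Fin N → ℝ) (hdisj : supp xt ∩ Λ = ∅)
    (h : Fin N → ℝ) (hh : h = (Amat Φ Λ)ᵀ.mulVec ((Amat Φ Λ).mulVec xt))
    (hRIP : RIP ((supp xt).card + Λ.card + 1) Φ δ) :
    ∀ j ∉ Λ, |h j - xt j| ≤ δ / (1 - δ) * l2 xt := by
  intro j hj
  set Γ := insert j (supp xt)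
  have hΓΛ : Disjoint Γ Λ :=
    Finset.disjoint_insert_left.2 ⟨hj, Finset.disjoint_iff_inter_eq_empty.2 hdisj⟩
  have hcard : (Γ ∪ Λ).card ≤ (supp xt).card + Λ.card + 1 := by
    have hΓ : Γ.card ≤ (supp xt).card + 1 := Finset.card_insert_le j (supp xt)
    exact (Finset.card_union_le _ _).trans (by omega)
  have key := hRIP.abs_inner_Amat_sub_inner_le hΓΛ hcard
    (single_mem_supportedOn (Finset.mem_insert_self j _))
    (mem_supportedOn.2 (Finset.subset_insert j (supp xt)) : WithLp.toLp 2 xt ∈ _)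
  rwa [← transpose_mulVec_mulVec_apply, ← hh, EuclideanSpace.inner_single_left,
    PiLp.norm_single, map_one, norm_one, one_mul, mul_one, WithLp.ofLp_toLp, ← l2_eq_norm] at key

end OMP
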